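/- arXiv:2509.25782 — 9 statements merged into one kernel-verified Lean document; each statement's English description precedes it below -/
import Mathlib

section
/- Let f : ℝ^d → ℝ be twice differentiable at a point x with gradient g = ∇f(x) and Hessian H = ∇²f(x), and assume H is invertible. Let φ : ℝ → ℝ be twice differentiable at f(x) with φ'(f(x)) ≠ 0, and set L = φ ∘ f, so ∇L(x) = φ'(f(x)) g and ∇²L(x) = φ'(f(x)) H + φ''(f(x)) g gᵀ. Assume the scaling factor s := 1 + (φ''(f(x))/φ'(f(x))) ⟨g, H⁻¹ g⟩ is nonzero. Then ∇²L(x) is invertible, and for every real stepsize α, setting α_φ := α · s, one has x − α_φ [∇²L(x)]⁻¹ ∇L(x) = x − α H⁻¹ g. That is, the damped Newton step on the transformed loss L with stepsize α_φ coincides with the damped Newton step on f with stepsize α. -/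
open RealInnerProductSpace

lemma grad_comp_aux {d : ℕ} {f : EuclideanSpace ℝ (Fin d) → ℝ} {φ : ℝ → ℝ}
    {y : EuclideanSpace ℝ (Fin d)} (hf : DifferentiableAt ℝ f y)
    (hφ : DifferentiableAt ℝ φ (f y)) :
    HasGradientAt (φ ∘ f) (deriv φ (f y) • gradient f y) y := by
  rw [hasGradientAt_iff_hasFDerivAt]
  have h1 : HasFDerivAt (φ ∘ f) (deriv φ (f y) • fderiv ℝ f y) y :=
    (hφ.hasDerivAt).comp_hasFDerivAt y hf.hasFDerivAt
  refine h1.congr_fderiv ?_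
  rw [map_smul]
  congr 1
  exact ((InnerProductSpace.toDual ℝ _).apply_symm_apply (fderiv ℝ f y)).symm

/-- **Transformation invariance of the damped Newton step.**
If `f` is twice differentiable at `x` with gradient `g` and invertible Hessian `H`,
`φ` is twice differentiable at `f x` with `φ'(f x) ≠ 0`, and the scaling factor
`s = 1 + (φ''/φ') ⟪g, H⁻¹ g⟫` is nonzero, then the Hessian of `L = φ ∘ f` at `x` is
invertible and for every stepsize `α`, the Newton step on `L` with stepsize `α * s`
coincides with the Newton step on `f` with stepsize `α`. -/
theorem stmt_0 (d : ℕ) (f : EuclideanSpace ℝ (Fin d) → ℝ)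
    (x : EuclideanSpace ℝ (Fin d)) (φ : ℝ → ℝ)
    (hf1 : ∀ᶠ y in nhds x, DifferentiableAt ℝ f y)
    (hf2 : DifferentiableAt ℝ (gradient f) x)
    (hφ1 : ∀ᶠ t in nhds (f x), DifferentiableAt ℝ φ t)
    (hφ2 : DifferentiableAt ℝ (deriv φ) (f x))
    (hφ' : deriv φ (f x) ≠ 0)
    (H : EuclideanSpace ℝ (Fin d) ≃L[ℝ] EuclideanSpace ℝ (Fin d))
    (hH : (H : EuclideanSpace ℝ (Fin d) →L[ℝ] EuclideanSpace ℝ (Fin d))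
        = fderiv ℝ (gradient f) x)
    (s : ℝ)
    (hs : s = 1 + (deriv (deriv φ) (f x) / deriv φ (f x)) *
        ⟪gradient f x, H.symm (gradient f x)⟫)
    (hs0 : s ≠ 0) :
    gradient (φ ∘ f) x = deriv φ (f x) • gradient f x ∧
    ∃ M : EuclideanSpace ℝ (Fin d) ≃L[ℝ] EuclideanSpace ℝ (Fin d),
      (M : EuclideanSpace ℝ (Fin d) →L[ℝ] EuclideanSpace ℝ (Fin d))
          = fderiv ℝ (gradient (φ ∘ f)) x ∧
      (M : EuclideanSpace ℝ (Fin d) →L[ℝ] EuclideanSpace ℝ (Fin d))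
          = deriv φ (f x) • fderiv ℝ (gradient f) x
            + deriv (deriv φ) (f x) •
              (innerSL ℝ (gradient f x)).smulRight (gradient f x) ∧
      ∀ α : ℝ, x - (α * s) • M.symm (gradient (φ ∘ f) x)
          = x - α • H.symm (gradient f x) := by
  set c : ℝ := deriv φ (f x) with hcdef
  set c2 : ℝ := deriv (deriv φ) (f x) with hc2def
  set g : EuclideanSpace ℝ (Fin d) := gradient f x with hgdef
  set u : EuclideanSpace ℝ (Fin d) := H.symm g with hudef
  set k : ℝ := ⟪g, u⟫ with hkdef
  have hc0 : c ≠ 0 := hφ'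
  have hfx : DifferentiableAt ℝ f x := hf1.self_of_nhds
  have hφx : DifferentiableAt ℝ φ (f x) := hφ1.self_of_nhds
  have hgradL : gradient (φ ∘ f) x = c • g := (grad_comp_aux hfx hφx).gradient
  refine ⟨hgradL, ?_⟩
  have hev : ∀ᶠ y in nhds x, DifferentiableAt ℝ φ (f y) :=
    hfx.continuousAt.eventually hφ1
  have hgradev : gradient (φ ∘ f) =ᶠ[nhds x] fun y => deriv φ (f y) • gradient f y := by
    filter_upwards [hf1, hev] with y h1 h2
    exact (grad_comp_aux h1 h2).gradient
  have hfd : fderiv ℝ f x = innerSL ℝ g := by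
    have h0 : fderiv ℝ f x = InnerProductSpace.toDual ℝ (EuclideanSpace ℝ (Fin d)) g :=
      ((InnerProductSpace.toDual ℝ _).apply_symm_apply (fderiv ℝ f x)).symm
    rw [h0]; ext v; simp [InnerProductSpace.toDual_apply_apply]
  have hcfd : HasFDerivAt (fun y => deriv φ (f y)) (c2 • innerSL ℝ g) x := by
    have h := (hφ2.hasDerivAt).comp_hasFDerivAt x hfx.hasFDerivAt
    rw [hfd] at h
    exact h
  have hprod : HasFDerivAt (fun y => deriv φ (f y) • gradient f y)
      (c • fderiv ℝ (gradient f) x + (c2 • innerSL ℝ g).smulRight g) x :=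
    hcfd.smul hf2.hasFDerivAt
  set A : EuclideanSpace ℝ (Fin d) →L[ℝ] EuclideanSpace ℝ (Fin d) :=
    c • fderiv ℝ (gradient f) x + c2 • (innerSL ℝ g).smulRight g with hAdef
  have hAeq : (c2 • innerSL ℝ g).smulRight g = c2 • (innerSL ℝ g).smulRight g := by
    ext v; simp [smul_smul, mul_assoc]
  have hfderivL : fderiv ℝ (gradient (φ ∘ f)) x = A := by
    rw [hgradev.fderiv_eq, hprod.fderiv, hAeq]
  have hcs : c * s = c + c2 * k := by
    rw [hs]; field_simp
  have hcs0 : c * s ≠ 0 := mul_ne_zero hc0 hs0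
  set t : ℝ := c2 / (c * s) with htdef
  have h5 : t * (c * s) = c2 := by rw [htdef]; field_simp
  have hck : c2 * k = c * s - c := by rw [hcs]; ring
  set B : EuclideanSpace ℝ (Fin d) →L[ℝ] EuclideanSpace ℝ (Fin d) :=
    c⁻¹ • ((H.symm : EuclideanSpace ℝ (Fin d) →L[ℝ] EuclideanSpace ℝ (Fin d))
      - t • ((innerSL ℝ g).comp
          (H.symm : EuclideanSpace ℝ (Fin d) →L[ℝ] EuclideanSpace ℝ (Fin d))).smulRight u)
    with hBdef
  have hAapp : ∀ v, A v = c • H v + (c2 * ⟪g, v⟫) • g := by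
    intro v
    rw [hAdef]
    simp [← hH, smul_smul]
  have hBapp : ∀ v, B v = c⁻¹ • (H.symm v - (t * ⟪g, H.symm v⟫) • u) := by
    intro v
    rw [hBdef]
    simp [smul_smul]
  have hBA : Function.LeftInverse B A := by
    intro v
    rw [hAapp v, hBapp]
    have h1 : H.symm (c • H v + (c2 * ⟪g, v⟫) • g) = c • v + (c2 * ⟪g, v⟫) • u := by
      rw [map_add, map_smul, map_smul, ContinuousLinearEquiv.symm_apply_apply, hudef]
    rw [h1]
    have h2 : ⟪g, c • v + (c2 * ⟪g, v⟫) • u⟫ = c * ⟪g, v⟫ + c2 * ⟪g, v⟫ * k := by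
      rw [inner_add_right, real_inner_smul_right, real_inner_smul_right, hkdef]
    rw [h2]
    have h3 : t * (c * ⟪g, v⟫ + c2 * ⟪g, v⟫ * k) = c2 * ⟪g, v⟫ := by
      linear_combination ⟪g, v⟫ * h5 + t * ⟪g, v⟫ * hck
    rw [h3]
    have h4 : c • v + (c2 * ⟪g, v⟫) • u - (c2 * ⟪g, v⟫) • u = c • v := by abel
    rw [h4, smul_smul, inv_mul_cancel₀ hc0, one_smul]
  have hAB : Function.RightInverse B A := by
    intro v
    rw [hBapp v, hAapp]
    have h1 : H (c⁻¹ • (H.symm v - (t * ⟪g, H.symm v⟫) • u)) =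
        c⁻¹ • (v - (t * ⟪g, H.symm v⟫) • g) := by
      rw [map_smul, map_sub, map_smul, hudef,
        ContinuousLinearEquiv.apply_symm_apply, ContinuousLinearEquiv.apply_symm_apply]
    rw [h1]
    set b : ℝ := ⟪g, H.symm v⟫ with hbdef
    have h2 : ⟪g, c⁻¹ • (H.symm v - (t * b) • u)⟫ = c⁻¹ * (b - t * b * k) := by
      rw [real_inner_smul_right, inner_sub_right, real_inner_smul_right, hkdef, hbdef]
    rw [h2]
    have h6 : c2 * (b - t * b * k) = c * (t * b) := by
      linear_combination (-b) * h5 + (-(t * b)) * hck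
    have hr : c2 * (c⁻¹ * (b - t * b * k)) = t * b := by
      field_simp
      linear_combination h6
    rw [hr, smul_smul, mul_inv_cancel₀ hc0, one_smul, sub_add_cancel]
  refine ⟨ContinuousLinearEquiv.equivOfInverse A B hBA hAB, ?_, ?_, ?_⟩
  · exact hfderivL.symm
  · rfl
  · intro α
    have hsymm : (ContinuousLinearEquiv.equivOfInverse A B hBA hAB).symm (c • g) = B (c • g) := by
      rw [ContinuousLinearEquiv.symm_equivOfInverse]
      rfl
    rw [hgradL, hsymm, hBapp]
    have h1 : H.symm (c • g) = c • u := by rw [map_smul, hudef]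
    rw [h1, real_inner_smul_right, ← hkdef]
    congr 1
    have h7 : c • u - (t * (c * k)) • u = (c - t * (c * k)) • u := by
      rw [sub_smul]
    rw [h7, smul_smul, smul_smul]
    have h8 : c - t * (c * k) = c / s := by
      rw [eq_div_iff hs0]
      linear_combination (-k) * h5 - hck
    have hsc : α * s * c⁻¹ * (c - t * (c * k)) = α := by
      rw [h8]
      field_simp
    rw [hsc]
end

section
/- Let f : ℝ^d → ℝ be twice differentiable at x with gradient g = ∇f(x) and invertible Hessian H = ∇²f(x), let φ : ℝ → ℝ be twice differentiable at f(x) with φ'(f(x)) ≠ 0, and let L = φ ∘ f. Assume the scaling factor s := 1 + (φ''(f(x))/φ'(f(x))) ⟨g, H⁻¹ g⟩ is nonzero (so ∇²L(x) = φ'(f(x)) H + φ''(f(x)) g gᵀ is invertible). Then for every real stepsize α_φ, the Newton step on f with the induced stepsize α := α_φ / s coincides with the Newton step on L with stepsize α_φ: x − α H⁻¹ g = x − α_φ [∇²L(x)]⁻¹ ∇L(x). -/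
open RealInnerProductSpace

set_option maxHeartbeats 1000000 in
/-- **Transformation-induced stepsize schedule.**
If `f` is twice differentiable at `x` with gradient `g` and invertible Hessian `H`,
`φ` is twice differentiable at `f x` with `φ'(f x) ≠ 0`, and the scaling factor
`s = 1 + (φ''/φ') ⟪g, H⁻¹ g⟫` is nonzero (so the Hessian of `L = φ ∘ f` at `x` is
invertible), then for every stepsize `α_φ`, the Newton step on `f` with the induced
stepsize `α = α_φ / s` coincides with the Newton step on `L` with stepsize `α_φ`. -/
theorem stmt_1 (d : ℕ) (f : EuclideanSpace ℝ (Fin d) → ℝ)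
    (x : EuclideanSpace ℝ (Fin d)) (φ : ℝ → ℝ)
    (hf1 : ∀ᶠ y in nhds x, DifferentiableAt ℝ f y)
    (hf2 : DifferentiableAt ℝ (gradient f) x)
    (hφ1 : ∀ᶠ t in nhds (f x), DifferentiableAt ℝ φ t)
    (hφ2 : DifferentiableAt ℝ (deriv φ) (f x))
    (hφ' : deriv φ (f x) ≠ 0)
    (H : EuclideanSpace ℝ (Fin d) ≃L[ℝ] EuclideanSpace ℝ (Fin d))
    (hH : (H : EuclideanSpace ℝ (Fin d) →L[ℝ] EuclideanSpace ℝ (Fin d))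
        = fderiv ℝ (gradient f) x)
    (s : ℝ)
    (hs : s = 1 + (deriv (deriv φ) (f x) / deriv φ (f x)) *
        ⟪gradient f x, H.symm (gradient f x)⟫)
    (hs0 : s ≠ 0) :
    ∃ M : EuclideanSpace ℝ (Fin d) ≃L[ℝ] EuclideanSpace ℝ (Fin d),
      (M : EuclideanSpace ℝ (Fin d) →L[ℝ] EuclideanSpace ℝ (Fin d))
          = fderiv ℝ (gradient (φ ∘ f)) x ∧
      ∀ αφ : ℝ, x - (αφ / s) • H.symm (gradient f x)
          = x - αφ • M.symm (gradient (φ ∘ f) x) := by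
  classical
  set a := deriv φ (f x) with ha
  set b := deriv (deriv φ) (f x) with hb
  set g := gradient f x with hg
  set q : ℝ := ⟪g, H.symm g⟫ with hq
  have hfx : DifferentiableAt ℝ f x := hf1.self_of_nhds
  have hfd : fderiv ℝ f x = InnerProductSpace.toDual ℝ _ g := by
    rw [hg, gradient, LinearIsometryEquiv.apply_symm_apply]
  have hfapp : ∀ v, fderiv ℝ f x v = ⟪g, v⟫ := by
    intro v; rw [hfd]; simp [InnerProductSpace.toDual_apply_apply]
  have hℓ : innerSL ℝ g = fderiv ℝ f x := by
    ext v; rw [hfapp]; simp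
  -- eventual equality of gradients
  have hev : gradient (φ ∘ f) =ᶠ[nhds x] fun y => deriv φ (f y) • gradient f y := by
    have h2 : ∀ᶠ y in nhds x, DifferentiableAt ℝ φ (f y) := hfx.continuousAt.eventually hφ1
    filter_upwards [hf1, h2] with y hy1 hy2
    have hcomp : fderiv ℝ (φ ∘ f) y = deriv φ (f y) • fderiv ℝ f y := by
      rw [fderiv_comp y hy2 hy1]
      ext v
      simp [fderiv_eq_smul_deriv, mul_comm]
    show gradient (φ ∘ f) y = _
    rw [gradient, hcomp, map_smul, gradient]
  have hgradLx : gradient (φ ∘ f) x = a • g := hev.self_of_nhds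
  -- the Hessian of L
  have hHf : HasFDerivAt (gradient f)
      (H : EuclideanSpace ℝ (Fin d) →L[ℝ] EuclideanSpace ℝ (Fin d)) x := hH ▸ hf2.hasFDerivAt
  have h1 : HasFDerivAt (fun y => deriv φ (f y)) (b • fderiv ℝ f x) x :=
    HasDerivAt.comp_hasFDerivAt x hφ2.hasDerivAt hfx.hasFDerivAt
  have hL : HasFDerivAt (gradient (φ ∘ f))
      (a • (H : EuclideanSpace ℝ (Fin d) →L[ℝ] EuclideanSpace ℝ (Fin d))
        + (b • fderiv ℝ f x).smulRight g) x :=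
    (h1.smul hHf).congr_of_eventuallyEq hev
  have hs' : a + b * q = a * s := by rw [hs]; field_simp
  have has : a * s ≠ 0 := mul_ne_zero hφ' hs0
  set A : EuclideanSpace ℝ (Fin d) →L[ℝ] EuclideanSpace ℝ (Fin d) :=
    a • (H : EuclideanSpace ℝ (Fin d) →L[ℝ] EuclideanSpace ℝ (Fin d))
      + (b • (innerSL ℝ g)).smulRight g with hA
  set N : EuclideanSpace ℝ (Fin d) →L[ℝ] EuclideanSpace ℝ (Fin d) :=
    (1/a) • (H.symm : EuclideanSpace ℝ (Fin d) →L[ℝ] EuclideanSpace ℝ (Fin d))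
      - ((b/(a*(a*s))) • ((innerSL ℝ g).comp
          (H.symm : EuclideanSpace ℝ (Fin d) →L[ℝ] EuclideanSpace ℝ (Fin d)))).smulRight
          (H.symm g) with hN
  have hAapp : ∀ v, A v = a • H v + (b * ⟪g, v⟫) • g := by
    intro v; simp [hA]
  have hNapp : ∀ w, N w = (1/a) • H.symm w - (b/(a*(a*s)) * ⟪g, H.symm w⟫) • H.symm g := by
    intro w; simp [hN]
  have hNA : Function.LeftInverse N A := by
    intro v
    rw [hAapp, hNapp, map_add, map_smul, map_smul, ContinuousLinearEquiv.symm_apply_apply]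
    rw [inner_add_right, real_inner_smul_right, real_inner_smul_right, ← hq]
    set t : ℝ := ⟪g, v⟫ with ht
    match_scalars
    · field_simp
    · field_simp
      linear_combination (-(b*t)) * hs'
  have hAN : Function.RightInverse N A := by
    intro w
    rw [hNapp, hAapp, map_sub, map_smul, map_smul, ContinuousLinearEquiv.apply_symm_apply,
      ContinuousLinearEquiv.apply_symm_apply, inner_sub_right, real_inner_smul_right,
      real_inner_smul_right, ← hq]
    set t : ℝ := ⟪g, H.symm w⟫ with ht
    match_scalars
    · field_simp
    · field_simp
      linear_combination (-(b*t)) * hs'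
  refine ⟨ContinuousLinearEquiv.equivOfInverse A N hNA hAN, ?_, ?_⟩
  · show A = _
    rw [hL.fderiv, hA, hℓ]
  · intro αφ
    set M := ContinuousLinearEquiv.equivOfInverse A N hNA hAN with hM
    have hMsymm : M.symm (gradient (φ ∘ f) x) = (1/s) • H.symm g := by
      rw [hgradLx]
      have h1 : M.symm (a • g) = N (a • g) := by
        rw [ContinuousLinearEquiv.symm_apply_eq]
        exact (hAN (a • g)).symm
      rw [h1, hNapp, map_smul, real_inner_smul_right, ← hq]
      match_scalars
      field_simp
      linear_combination (-1) * hs'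
    rw [hMsymm, smul_smul, mul_one_div]
end

section
/- Let A be a symmetric positive definite d×d real matrix, let p > 2 be real, and define f : ℝ^d → ℝ by f(x) = (1/p) ‖x‖_A^p, where ‖x‖_A = √⟨x, A x⟩. Then for every x ≠ 0 the Hessian ∇²f(x) = (p−2)‖x‖_A^{p−4} A x xᵀ A + ‖x‖_A^{p−2} A is invertible, [∇²f(x)]⁻¹ ∇f(x) = x/(p−1), and consequently the damped Newton step with stepsize α satisfies x − α[∇²f(x)]⁻¹ ∇f(x) = (1 − α/(p−1)) x. In particular, with stepsize α = p − 1 the Newton method reaches the minimizer 0 in a single iteration from any x ≠ 0. -/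
open RealInnerProductSpace

/-- **Newton's method on `f(x) = (1/p)‖x‖_A^p` converges in one step with stepsize `p-1`.**
For a symmetric positive definite `A` and real `p > 2`, the Hessian of
`f(x) = (1/p)‖x‖_A^p` at any `x ≠ 0` equals
`(p−2)‖x‖_A^{p−4} A x xᵀ A + ‖x‖_A^{p−2} A`, is invertible, and satisfies
`[∇²f(x)]⁻¹ ∇f(x) = x/(p−1)`; hence the damped Newton step with stepsize `α` is
`(1 − α/(p−1)) x`, and with `α = p − 1` it reaches the minimizer `0` in one step. -/
theorem stmt_5 (d : ℕ) (A : Matrix (Fin d) (Fin d) ℝ) (hA : A.PosDef) (p : ℝ)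
    (hp : 2 < p)
    (f : EuclideanSpace ℝ (Fin d) → ℝ)
    (hf : f = fun y => (1 / p) * Real.sqrt ⟪y, Matrix.toEuclideanLin A y⟫ ^ p) :
    ∀ x : EuclideanSpace ℝ (Fin d), x ≠ 0 →
      ∃ M : EuclideanSpace ℝ (Fin d) ≃L[ℝ] EuclideanSpace ℝ (Fin d),
        (M : EuclideanSpace ℝ (Fin d) →L[ℝ] EuclideanSpace ℝ (Fin d))
            = fderiv ℝ (gradient f) x ∧
        (∀ v : EuclideanSpace ℝ (Fin d),
          M v = ((p - 2) * Real.sqrt ⟪x, Matrix.toEuclideanLin A x⟫ ^ (p - 4)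
                  * ⟪Matrix.toEuclideanLin A x, v⟫) • Matrix.toEuclideanLin A x
                + (Real.sqrt ⟪x, Matrix.toEuclideanLin A x⟫ ^ (p - 2)) •
                    Matrix.toEuclideanLin A v) ∧
        M.symm (gradient f x) = (p - 1)⁻¹ • x ∧
        (∀ α : ℝ, x - α • M.symm (gradient f x) = (1 - α / (p - 1)) • x) ∧
        x - (p - 1) • M.symm (gradient f x) = 0 := by
  intro x hx
  classical
  let Lc : EuclideanSpace ℝ (Fin d) →L[ℝ] EuclideanSpace ℝ (Fin d) :=
    LinearMap.toContinuousLinearMap (Matrix.toEuclideanLin A)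
  have hLc : ∀ y : EuclideanSpace ℝ (Fin d), Matrix.toEuclideanLin A y = Lc y := fun _ => rfl
  have hp0 : p ≠ 0 := by linarith
  have hp1 : p - 1 ≠ 0 := by intro h; nlinarith [sub_eq_zero.mp h]
  have hsym : ∀ u v : EuclideanSpace ℝ (Fin d), ⟪Lc u, v⟫ = ⟪u, Lc v⟫ :=
    fun u v => (Matrix.isHermitian_iff_isSymmetric.mp hA.1) u v
  have hpos : ∀ y : EuclideanSpace ℝ (Fin d), y ≠ 0 → 0 < ⟪y, Lc y⟫ := by
    intro y hy
    have h := hA.re_dotProduct_pos (x := (WithLp.equiv 2 _) y) (by simpa using hy)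
    show 0 < ⟪y, Matrix.toEuclideanLin A y⟫
    rw [EuclideanSpace.inner_eq_star_dotProduct]
    simpa [dotProduct_comm] using h
  have hnn : ∀ y : EuclideanSpace ℝ (Fin d), 0 ≤ ⟪y, Lc y⟫ := by
    intro y
    by_cases h : y = 0
    · simp [h]
    · exact (hpos y h).le
  have hgderiv : ∀ y : EuclideanSpace ℝ (Fin d),
      HasFDerivAt (fun t : EuclideanSpace ℝ (Fin d) => ⟪t, Lc t⟫)
      ((2 : ℝ) • (innerSL ℝ (Lc y))) y := by
    intro y
    have h := (hasFDerivAt_id y).inner ℝ Lc.hasFDerivAt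
    refine h.congr_fderiv (Eq.symm ?_)
    ext v
    simp only [ContinuousLinearMap.smul_apply, innerSL_apply_apply,
      ContinuousLinearMap.comp_apply, ContinuousLinearMap.prod_apply,
      ContinuousLinearMap.coe_id', id_eq, fderivInnerCLM_apply, smul_eq_mul]
    rw [← hsym y v, real_inner_comm v (Lc y)]
    ring
  have hpowderiv : ∀ (y : EuclideanSpace ℝ (Fin d)), y ≠ 0 → ∀ c : ℝ,
      HasFDerivAt (fun t : EuclideanSpace ℝ (Fin d) => ⟪t, Lc t⟫ ^ c)
        ((2 * c * ⟪y, Lc y⟫ ^ (c - 1)) • innerSL ℝ (Lc y)) y := by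
    intro y hy c
    have h := (hgderiv y).rpow_const (p := c) (Or.inl (hpos y hy).ne')
    refine h.congr_fderiv (Eq.symm ?_)
    rw [smul_smul]
    congr 1
    ring
  have hf2 : f = fun y : EuclideanSpace ℝ (Fin d) => (1 / p) * ⟪y, Lc y⟫ ^ (p / 2) := by
    rw [hf]
    funext y
    congr 1
    rw [hLc, Real.sqrt_eq_rpow, ← Real.rpow_mul (hnn y)]
    congr 1
    ring
  have hfgrad : ∀ y : EuclideanSpace ℝ (Fin d), y ≠ 0 →
      HasGradientAt f ((⟪y, Lc y⟫ ^ (p / 2 - 1)) • Lc y) y := by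
    intro y hy
    rw [hf2, hasGradientAt_iff_hasFDerivAt]
    have h1 := (hpowderiv y hy (p / 2)).const_mul (1 / p)
    refine h1.congr_fderiv (Eq.symm ?_)
    ext v
    simp only [InnerProductSpace.toDual_apply_apply, ContinuousLinearMap.smul_apply,
      innerSL_apply_apply, smul_eq_mul]
    rw [real_inner_smul_left]
    field_simp
  have hgradeq : ∀ y : EuclideanSpace ℝ (Fin d), y ≠ 0 →
      gradient f y = (⟪y, Lc y⟫ ^ (p / 2 - 1)) • Lc y :=
    fun y hy => (hfgrad y hy).gradient
  set M' : EuclideanSpace ℝ (Fin d) →L[ℝ] EuclideanSpace ℝ (Fin d) :=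
    (⟪x, Lc x⟫ ^ (p / 2 - 1)) • Lc +
      (((p - 2) * ⟪x, Lc x⟫ ^ (p / 2 - 2)) • innerSL ℝ (Lc x)).smulRight (Lc x) with hM'
  have hMapply : ∀ v : EuclideanSpace ℝ (Fin d), M' v =
      ((p - 2) * ⟪x, Lc x⟫ ^ (p / 2 - 2) * ⟪Lc x, v⟫) • Lc x
        + (⟪x, Lc x⟫ ^ (p / 2 - 1)) • Lc v := by
    intro v
    simp only [hM', ContinuousLinearMap.add_apply, ContinuousLinearMap.smul_apply,
      ContinuousLinearMap.smulRight_apply, innerSL_apply_apply, smul_eq_mul]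
    rw [add_comm]
  have hG : HasFDerivAt
      (fun y : EuclideanSpace ℝ (Fin d) => (⟪y, Lc y⟫ ^ (p / 2 - 1)) • Lc y) M' x := by
    have h := (hpowderiv x hx (p / 2 - 1)).smul Lc.hasFDerivAt
    have h22 : 2 * (p / 2 - 1) = p - 2 := by ring
    have h23 : p / 2 - 1 - 1 = p / 2 - 2 := by ring
    rw [h22, h23] at h
    exact h
  have heq : gradient f =ᶠ[nhds x]
      (fun y : EuclideanSpace ℝ (Fin d) => (⟪y, Lc y⟫ ^ (p / 2 - 1)) • Lc y) := by
    filter_upwards [isOpen_compl_singleton.mem_nhds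
      (by simpa using hx : x ∈ ({0} : Set (EuclideanSpace ℝ (Fin d)))ᶜ)] with y hy
    exact hgradeq y (by simpa using hy)
  have hfderiv : fderiv ℝ (gradient f) x = M' := by
    rw [heq.fderiv_eq]
    exact hG.fderiv
  have hinj : Function.Injective M' := by
    intro u v huv
    rw [← sub_eq_zero]
    by_contra hne
    have hw : M' (u - v) = 0 := by rw [map_sub, huv, sub_self]
    have h0 : (0 : ℝ) < ⟪u - v, M' (u - v)⟫ := by
      rw [hMapply]
      rw [inner_add_right, real_inner_smul_right, real_inner_smul_right]
      have hcomm : ⟪u - v, Lc x⟫ = ⟪Lc x, u - v⟫ := real_inner_comm _ _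
      rw [hcomm]
      have h1 : (0:ℝ) ≤ (p - 2) * ⟪x, Lc x⟫ ^ (p / 2 - 2) :=
        mul_nonneg (by linarith) (Real.rpow_nonneg (hnn x) _)
      have t1 : (0:ℝ) ≤ (p - 2) * ⟪x, Lc x⟫ ^ (p / 2 - 2) * ⟪Lc x, u - v⟫ * ⟪Lc x, u - v⟫ := by
        rw [mul_assoc]
        exact mul_nonneg h1 (mul_self_nonneg _)
      have t2 : 0 < ⟪x, Lc x⟫ ^ (p / 2 - 1) * ⟪u - v, Lc (u - v)⟫ :=
        mul_pos (Real.rpow_pos_of_pos (hpos x hx) _) (hpos _ hne)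
      linarith
    rw [hw, inner_zero_right] at h0
    exact lt_irrefl 0 h0
  have hsurj : Function.Surjective M' :=
    (LinearMap.injective_iff_surjective
      (f := (M' : EuclideanSpace ℝ (Fin d) →ₗ[ℝ] EuclideanSpace ℝ (Fin d)))).mp hinj
  let Meq : EuclideanSpace ℝ (Fin d) ≃ₗ[ℝ] EuclideanSpace ℝ (Fin d) :=
    LinearEquiv.ofBijective (M' : EuclideanSpace ℝ (Fin d) →ₗ[ℝ] EuclideanSpace ℝ (Fin d))
      ⟨hinj, hsurj⟩
  let M : EuclideanSpace ℝ (Fin d) ≃L[ℝ] EuclideanSpace ℝ (Fin d) :=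
    Meq.toContinuousLinearEquiv
  have hMcoe : ∀ v : EuclideanSpace ℝ (Fin d), M v = M' v := fun _ => rfl
  have h2 : ⟪x, Lc x⟫ ^ (p / 2 - 2) * ⟪x, Lc x⟫ = ⟪x, Lc x⟫ ^ (p / 2 - 1) := by
    rw [← Real.rpow_add_one (hpos x hx).ne' (p / 2 - 2)]
    congr 1
    ring
  have hMx : M ((p - 1)⁻¹ • x) = gradient f x := by
    have hcx : ⟪Lc x, x⟫ = ⟪x, Lc x⟫ := real_inner_comm _ _
    rw [hMcoe, map_smul, hMapply x, hgradeq x hx, hcx, mul_assoc (p - 2), h2]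
    match_scalars
    field_simp
    ring
  have h3 : M.symm (gradient f x) = (p - 1)⁻¹ • x := by
    rw [← hMx, ContinuousLinearEquiv.symm_apply_apply]
  refine ⟨M, ?_, ?_, h3, ?_, ?_⟩
  · rw [hfderiv]
    exact ContinuousLinearMap.ext fun v => hMcoe v
  · intro v
    rw [hMcoe, hMapply v, hLc, hLc]
    have hsq : ∀ c : ℝ, Real.sqrt ⟪x, Lc x⟫ ^ c = ⟪x, Lc x⟫ ^ (c / 2) := by
      intro c
      rw [Real.sqrt_eq_rpow, ← Real.rpow_mul (hnn x)]
      congr 1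
      ring
    rw [hsq, hsq]
    rw [show (p - 4) / 2 = p / 2 - 2 by ring, show (p - 2) / 2 = p / 2 - 1 by ring]
  · intro α
    rw [h3, smul_smul, sub_smul, one_smul, div_eq_mul_inv]
  · rw [h3, smul_smul, mul_inv_cancel₀ hp1, one_smul, sub_self]
end

section
/- Let f : ℝ^d → ℝ be twice continuously differentiable and pseudoconvex, i.e., for all x, y ∈ ℝ^d, f(y) < f(x) implies ⟨∇f(x), y − x⟩ < 0. Then for every x ∈ ℝ^d and every v ∈ ℝ^d with ⟨v, ∇f(x)⟩ = 0, one has ⟨v, ∇²f(x) v⟩ ≥ 0. That is, the Hessian of a pseudoconvex function is positive semidefinite on the hyperplane orthogonal to the gradient. -/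
open RealInnerProductSpace

/-- **The Hessian of a pseudoconvex function is positive semidefinite on the
hyperplane orthogonal to the gradient.** -/
theorem stmt_8 (d : ℕ) (f : EuclideanSpace ℝ (Fin d) → ℝ)
    (hf : ContDiff ℝ 2 f)
    (hpc : ∀ x y : EuclideanSpace ℝ (Fin d), f y < f x → ⟪gradient f x, y - x⟫ < 0)
    (x v : EuclideanSpace ℝ (Fin d)) (hv : ⟪v, gradient f x⟫ = 0) :
    0 ≤ ⟪v, fderiv ℝ (gradient f) x v⟫ := by
  by_contra hc
  push_neg at hc
  set c : ℝ := ⟪v, fderiv ℝ (gradient f) x v⟫ with hcdef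
  have hfd : Differentiable ℝ f := hf.differentiable (by norm_num)
  -- gradient is differentiable
  have h1 : DifferentiableAt ℝ (fderiv ℝ f) x :=
    ((hf.fderiv_right (m := 1) (by norm_num)).differentiable one_ne_zero) x
  have hgd : DifferentiableAt ℝ (gradient f) x := by
    have h2 : DifferentiableAt ℝ
        (fun y : EuclideanSpace ℝ (Fin d) => (InnerProductSpace.toDual ℝ (EuclideanSpace ℝ (Fin d))).symm (fderiv ℝ f y)) x :=
      (InnerProductSpace.toDual ℝ (EuclideanSpace ℝ (Fin d))).symm.toContinuousLinearEquiv.differentiableAt.comp x h1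
    exact h2
  -- the line
  have hL : ∀ t : ℝ, HasDerivAt (fun s : ℝ => x + s • v) v t := by
    intro t
    have := ((hasDerivAt_id t).smul_const v).const_add x
    simpa using this
  set g : ℝ → ℝ := fun t => f (x + t • v) with hgdef
  set φ : ℝ → ℝ := fun t => ⟪v, gradient f (x + t • v)⟫ with hφdef
  have hkey : ∀ (y : EuclideanSpace ℝ (Fin d)) (w : EuclideanSpace ℝ (Fin d)), ⟪gradient f y, w⟫ = fderiv ℝ f y w := by
    intro y w
    rw [gradient]
    exact InnerProductSpace.toDual_symm_apply
  have hgφ : ∀ t : ℝ, HasDerivAt g (φ t) t := by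
    intro t
    have h3 : HasDerivAt (fun s : ℝ => f (x + s • v)) (fderiv ℝ f (x + t • v) v) t :=
      (hfd (x + t • v)).hasFDerivAt.comp_hasDerivAt t (hL t)
    have : φ t = fderiv ℝ f (x + t • v) v := by
      rw [hφdef]; simp only; rw [real_inner_comm, hkey]
    rw [this]
    exact h3
  have hφ0 : φ 0 = 0 := by
    show ⟪v, gradient f (x + (0:ℝ) • v)⟫ = 0
    rw [zero_smul, add_zero]; exact hv
  have hφd : HasDerivAt φ c 0 := by
    have h4 : HasDerivAt (fun t : ℝ => gradient f (x + t • v))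
        (fderiv ℝ (gradient f) x v) 0 := by
      have hx0 : x = x + (0:ℝ) • v := by simp
      have h6 : HasFDerivAt (gradient f) (fderiv ℝ (gradient f) x) (x + (0:ℝ) • v) :=
        hx0 ▸ hgd.hasFDerivAt
      exact h6.comp_hasDerivAt 0 (hL 0)
    have h5 := ((innerSL ℝ v).hasFDerivAt.comp_hasDerivAt 0 h4)
    exact h5
  have hmin : ∀ t : ℝ, g 0 ≤ g t := by
    intro t
    by_contra hlt
    push_neg at hlt
    have hfx : f (x + t • v) < f x := by simpa [hgdef] using hlt
    have := hpc x (x + t • v) hfx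
    rw [add_sub_cancel_left, real_inner_smul_right, real_inner_comm, hv, mul_zero] at this
    exact lt_irrefl 0 this
  -- slope tends to c < 0
  have hslope : Filter.Tendsto (slope φ 0) (nhdsWithin 0 {(0:ℝ)}ᶜ) (nhds c) :=
    hasDerivAt_iff_tendsto_slope.mp hφd
  have hev : ∀ᶠ t in nhdsWithin 0 (Set.Ioi (0:ℝ)), slope φ 0 t < 0 := by
    have : ∀ᶠ t in nhdsWithin 0 {(0:ℝ)}ᶜ, slope φ 0 t < 0 :=
      hslope.eventually (Filter.Tendsto.eventually_lt_const hc Filter.tendsto_id)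
    exact this.filter_mono (nhdsWithin_mono 0 (fun t ht => ne_of_gt ht))
  obtain ⟨δ, hδ, hδ2⟩ : ∃ δ > 0, ∀ t ∈ Set.Ioo (0:ℝ) δ, slope φ 0 t < 0 := by
    rw [Filter.eventually_iff, Metric.mem_nhdsWithin_iff] at hev
    obtain ⟨ε, hε, hsub⟩ := hev
    refine ⟨ε, hε, fun t ht => hsub ⟨?_, ht.1⟩⟩
    simp only [Metric.mem_ball, Real.dist_eq, sub_zero]
    rw [abs_of_pos ht.1]; exact ht.2
  -- MVT on [0, δ/2]
  have hcont : ContinuousOn g (Set.Icc 0 (δ/2)) :=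
    fun t _ => ((hgφ t).continuousAt).continuousWithinAt
  obtain ⟨ξ, hξ, hξ2⟩ := exists_hasDerivAt_eq_slope g φ (by linarith : (0:ℝ) < δ/2) hcont
    (fun t _ => hgφ t)
  have hξpos : 0 < ξ := hξ.1
  have hφξ : 0 ≤ φ ξ := by
    rw [hξ2]
    apply div_nonneg (by linarith [hmin (δ/2)]) (by linarith)
  have hsl : slope φ 0 ξ < 0 := hδ2 ξ ⟨hξpos, lt_of_lt_of_le hξ.2 (by linarith)⟩
  rw [slope_def_field] at hsl
  rw [hφ0, sub_zero, sub_zero] at hsl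
  exact absurd hsl (not_lt.mpr (div_nonneg hφξ hξpos.le))
end

section
/- Let Δ ⊆ ℝ^d be a convex set, let f : ℝ^d → ℝ be twice continuously differentiable, and let c > 0 satisfy: for all x ∈ Δ and all v ∈ ℝ^d, ⟨v, ∇²f(x) v⟩ + c · ⟨∇f(x), v⟩² ≥ 0. Let m ∈ ℝ be a lower bound with m ≤ f(x) for all x ∈ Δ. Then the function x ↦ (exp(c (f(x) − m)) − 1)/c is convex on Δ. -/
open RealInnerProductSpace

/-- **Convexification on a compact (convex) set.** If on a convex set `Δ` the matrix
`∇²f(x) + c ∇f(x) ∇f(x)ᵀ` is positive semidefinite and `m` lower-bounds `f` on `Δ`,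
then `x ↦ (exp(c (f(x) − m)) − 1)/c` is convex on `Δ`. -/
theorem stmt_11 (d : ℕ) (Δ : Set (EuclideanSpace ℝ (Fin d))) (hΔ : Convex ℝ Δ)
    (f : EuclideanSpace ℝ (Fin d) → ℝ) (hf : ContDiff ℝ 2 f)
    (c : ℝ) (hc : 0 < c)
    (h : ∀ x ∈ Δ, ∀ v : EuclideanSpace ℝ (Fin d),
      0 ≤ ⟪v, fderiv ℝ (gradient f) x v⟫ + c * ⟪gradient f x, v⟫ ^ 2)
    (m : ℝ) (hm : ∀ x ∈ Δ, m ≤ f x) :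
    ConvexOn ℝ Δ (fun x => (Real.exp (c * (f x - m)) - 1) / c) := by
  have hgrad : ContDiff ℝ 1 (gradient f) := by
    have h1 : ContDiff ℝ 1 (fderiv ℝ f) :=
      ((contDiff_succ_iff_fderiv (n := 1)).mp (by rw [one_add_one_eq_two]; exact hf)).2.2
    exact ((InnerProductSpace.toDual ℝ (EuclideanSpace ℝ (Fin d))).symm.contDiff).comp h1
  have hfdiff : Differentiable ℝ f := hf.differentiable two_ne_zero
  have hgdiff : Differentiable ℝ (gradient f) := hgrad.differentiable one_ne_zero
  have hinner : ∀ z v : EuclideanSpace ℝ (Fin d), fderiv ℝ f z v = ⟪gradient f z, v⟫ := by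
    intro z v
    rw [gradient, InnerProductSpace.toDual_symm_apply]
  constructor
  · exact hΔ
  intro x hx y hy a b ha hb hab
  set v : EuclideanSpace ℝ (Fin d) := y - x with hv
  set γ : ℝ → EuclideanSpace ℝ (Fin d) := fun t => x + t • v with hγ
  have hγmem : ∀ t ∈ Set.Icc (0:ℝ) 1, γ t ∈ Δ := by
    intro t ht
    have heq : γ t = (1 - t) • x + t • y := by
      simp only [hγ, hv, smul_sub, sub_smul, one_smul]
      abel
    rw [heq]
    exact hΔ hx hy (sub_nonneg.mpr ht.2) ht.1 (by ring)
  have hγd : ∀ t : ℝ, HasDerivAt γ v t := by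
    intro t
    simpa [hγ] using ((hasDerivAt_id t).smul_const v).const_add x
  set p : ℝ → ℝ := fun t => ⟪gradient f (γ t), v⟫ with hp
  set q : ℝ → ℝ := fun t => ⟪v, fderiv ℝ (gradient f) (γ t) v⟫ with hq
  set u : ℝ → ℝ := fun t => f (γ t) with hu
  have hud : ∀ t, HasDerivAt u (p t) t := by
    intro t
    have this : HasDerivAt (fun s => f (γ s)) (fderiv ℝ f (γ t) v) t :=
      ((hfdiff (γ t)).hasFDerivAt).comp_hasDerivAt t (hγd t)
    rw [hinner] at this
    exact this
  have hpd : ∀ t, HasDerivAt p (q t) t := by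
    intro t
    have hG : HasDerivAt (fun s => gradient f (γ s)) (fderiv ℝ (gradient f) (γ t) v) t :=
      ((hgdiff (γ t)).hasFDerivAt).comp_hasDerivAt t (hγd t)
    have h2 : HasDerivAt (fun s => ⟪v, gradient f (γ s)⟫) ⟪v, fderiv ℝ (gradient f) (γ t) v⟫ t :=
      ((innerSL ℝ v).hasFDerivAt).comp_hasDerivAt t hG
    simp only [hp, hq]
    convert h2 using 2 with s
    · exact real_inner_comm _ _
  set g : ℝ → ℝ := fun t => (Real.exp (c * (u t - m)) - 1) / c with hg
  have hgd : ∀ t, HasDerivAt g (Real.exp (c * (u t - m)) * p t) t := by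
    intro t
    have h1 : HasDerivAt (fun s => c * (u s - m)) (c * p t) t :=
      (((hud t).sub_const m).const_mul c)
    have h3 : HasDerivAt g (Real.exp (c * (u t - m)) * (c * p t) / c) t :=
      ((h1.exp).sub_const 1).div_const c
    convert h3 using 1
    field_simp
  have hderivg : deriv g = fun t => Real.exp (c * (u t - m)) * p t :=
    funext fun t => (hgd t).deriv
  have hgd2 : ∀ t, HasDerivAt (deriv g)
      (Real.exp (c * (u t - m)) * (c * p t ^ 2 + q t)) t := by
    intro t
    rw [hderivg]
    have h1 : HasDerivAt (fun s => Real.exp (c * (u s - m)))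
        (Real.exp (c * (u t - m)) * (c * p t)) t :=
      (((hud t).sub_const m).const_mul c).exp
    have h2 : HasDerivAt (fun s => Real.exp (c * (u s - m)) * p s)
        (Real.exp (c * (u t - m)) * (c * p t) * p t + Real.exp (c * (u t - m)) * q t) t :=
      h1.mul (hpd t)
    convert h2 using 1
    ring
  have hconv : ConvexOn ℝ (Set.Icc (0:ℝ) 1) g := by
    apply convexOn_of_deriv2_nonneg (convex_Icc 0 1)
    · exact fun t _ => ((hgd t).continuousAt).continuousWithinAt
    · exact fun t _ => ((hgd t).differentiableAt).differentiableWithinAt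
    · exact fun t _ => ((hgd2 t).differentiableAt).differentiableWithinAt
    · intro t ht
      rw [interior_Icc] at ht
      have h2 : deriv (deriv g) t = Real.exp (c * (u t - m)) * (c * p t ^ 2 + q t) :=
        (hgd2 t).deriv
      have hmem := hγmem t (Set.mem_Icc_of_Ioo ht)
      have hnn := h (γ t) hmem v
      rw [show deriv^[2] g = deriv (deriv g) from rfl, h2]
      have h3 : 0 ≤ c * p t ^ 2 + q t := by
        rw [hp, hq]; linarith
      positivity
  have key := hconv.2 (Set.mem_Icc.mpr ⟨le_refl 0, zero_le_one⟩)
      (Set.mem_Icc.mpr ⟨zero_le_one, le_refl 1⟩) ha hb hab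
  have hγ0 : γ 0 = x := by simp [hγ]
  have hγ1 : γ 1 = y := by simp [hγ, hv]
  have hγb : γ b = a • x + b • y := by
    simp only [hγ, hv, smul_sub]
    have hab' : a = 1 - b := by linarith
    rw [hab']
    module
  have hkey : g (a * 0 + b * 1) ≤ a * g 0 + b * g 1 := key
  simpa [hg, hu, hγ0, hγ1, hγb] using hkey
end

section
/- Let f : ℝ^d → ℝ be twice continuously differentiable and strictly pseudoconvex, i.e., for all x ≠ y, f(y) ≤ f(x) implies ⟨∇f(x), y − x⟩ < 0, and let x* be its unique global minimizer (so f(y) > f(x*) for all y ≠ x* and ∇f(x*) = 0). Define g : ℝ^d → ℝ by g(x) = f(x*) + ∫₀¹ ⟨∇f(x* + t(x − x*)), x − x*⟩ / t dt (the integral converges since ∇f(x*) = 0). Then g is star-convex with center x*: for all x ∈ ℝ^d and λ ∈ [0,1], g(x* + λ(x − x*)) ≤ (1−λ) g(x*) + λ g(x), and g(x*) = f(x*). -/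
open RealInnerProductSpace

section starAux
variable {d : ℕ}

lemma inner_gradient_eq' (f : EuclideanSpace ℝ (Fin d) → ℝ) (y v : EuclideanSpace ℝ (Fin d)) :
    ⟪gradient f y, v⟫ = fderiv ℝ f y v := by
  rw [gradient, InnerProductSpace.toDual_symm_apply]

/-- `q s = ⟪∇f(xs + s•Δ), Δ⟫` is `C¹` (it is the derivative of the C² function `s ↦ f(xs+s•Δ)`). -/
lemma q_contDiff (f : EuclideanSpace ℝ (Fin d) → ℝ) (hf : ContDiff ℝ 2 f)
    (xs Δ : EuclideanSpace ℝ (Fin d)) :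
    ContDiff ℝ 1 (fun s : ℝ => ⟪gradient f (xs + s • Δ), Δ⟫) := by
  set c : ℝ → EuclideanSpace ℝ (Fin d) := fun s => xs + s • Δ with hc
  have hcd : ContDiff ℝ 2 (fun s => f (c s)) :=
    hf.comp (contDiff_const.add (contDiff_id.smul contDiff_const))
  have hderiv : ∀ s : ℝ, deriv (fun s => f (c s)) s = ⟪gradient f (c s), Δ⟫ := by
    intro s
    have hc' : HasDerivAt c Δ s := by
      simpa [hc] using ((hasDerivAt_id s).smul_const Δ).const_add xs
    have hfd : HasFDerivAt f (fderiv ℝ f (c s)) (c s) :=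
      (hf.differentiable (by norm_num) (c s)).hasFDerivAt
    have hda := hfd.comp_hasDerivAt s hc'
    simp only [Function.comp_def] at hda
    rw [hda.deriv, inner_gradient_eq']
  have h2 : ContDiff ℝ 1 (deriv (fun s => f (c s))) := by
    have : ContDiff ℝ ((1:ℕ) + 1) (fun s => f (c s)) := by exact_mod_cast hcd
    exact (contDiff_succ_iff_deriv.mp this).2.2
  have hfe : (fun s : ℝ => ⟪gradient f (c s), Δ⟫) = deriv (fun s => f (c s)) :=
    funext fun s => (hderiv s).symm
  exact hfe ▸ h2

end starAux

/-- **Star-convexification of strictly pseudoconvex losses.**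
For a strictly pseudoconvex `C²` function `f` with unique global minimizer `x*`,
the function `g(x) = f(x*) + ∫₀¹ ⟪∇f(x* + t(x − x*)), x − x*⟫ / t dt`
is star-convex with center `x*`, and `g(x*) = f(x*)`. -/
theorem stmt_12 (d : ℕ) (f : EuclideanSpace ℝ (Fin d) → ℝ)
    (hf : ContDiff ℝ 2 f)
    (hspc : ∀ x y : EuclideanSpace ℝ (Fin d), x ≠ y → f y ≤ f x →
      ⟪gradient f x, y - x⟫ < 0)
    (xs : EuclideanSpace ℝ (Fin d))
    (hmin : ∀ y : EuclideanSpace ℝ (Fin d), y ≠ xs → f xs < f y)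
    (hgrad0 : gradient f xs = 0)
    (g : EuclideanSpace ℝ (Fin d) → ℝ)
    (hg : g = fun x => f xs +
      ∫ t in (0 : ℝ)..1, ⟪gradient f (xs + t • (x - xs)), x - xs⟫ / t) :
    (∀ x : EuclideanSpace ℝ (Fin d), ∀ lam ∈ Set.Icc (0 : ℝ) 1,
      g (xs + lam • (x - xs)) ≤ (1 - lam) * g xs + lam * g x) ∧
    g xs = f xs := by
  have hgxs : g xs = f xs := by
    rw [hg]; simp
  refine ⟨?_, hgxs⟩
  intro x lam hlam
  obtain ⟨hlam0, hlam1⟩ := hlam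
  rcases eq_or_lt_of_le hlam0 with rfl | hlampos
  · simp [hgxs]
  set Δ : EuclideanSpace ℝ (Fin d) := x - xs with hΔ
  set q : ℝ → ℝ := fun s => ⟪gradient f (xs + s • Δ), Δ⟫ with hqdef
  set h : ℝ → ℝ := fun s => q s / s with hhdef
  have hq : ContDiff ℝ 1 q := q_contDiff f hf xs Δ
  have hq0 : q 0 = 0 := by
    show ⟪gradient f (xs + (0:ℝ) • Δ), Δ⟫ = 0
    rw [zero_smul, add_zero, hgrad0, inner_zero_left]
  -- nonnegativity of q on (0, ∞)
  have hqpos : ∀ s : ℝ, 0 < s → 0 ≤ q s := by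
    intro s hs
    rcases eq_or_ne Δ 0 with h0 | h0
    · simp [hqdef, h0]
    have hy : xs + s • Δ ≠ xs := by
      simp [smul_ne_zero (ne_of_gt hs) h0]
    have hlt := hspc (xs + s • Δ) xs hy (le_of_lt (hmin _ hy))
    have : xs - (xs + s • Δ) = -(s • Δ) := by abel
    rw [this, inner_neg_right] at hlt
    have hpos' : (0:ℝ) < ⟪gradient f (xs + s • Δ), s • Δ⟫ := by linarith
    rw [real_inner_smul_right] at hpos'
    nlinarith
  have hhnonneg : ∀ s : ℝ, 0 < s → 0 ≤ h s := fun s hs =>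
    div_nonneg (hqpos s hs) hs.le
  -- bound on [0,1]: |q s| ≤ M * s
  obtain ⟨M, hM⟩ := (isCompact_Icc (a := (0:ℝ)) (b := 1)).exists_bound_of_continuousOn
    ((hq.continuous_deriv le_rfl).continuousOn)
  have hqbound : ∀ s ∈ Set.Icc (0:ℝ) 1, |q s| ≤ M * s := by
    intro s hs
    have := norm_image_sub_le_of_norm_deriv_le_segment'
      (f := q) (f' := deriv q) (a := 0) (b := 1) (C := M)
      (fun u hu => ((hq.differentiable (by norm_num)) u).hasDerivAt.hasDerivWithinAt)
      (fun u hu => hM u (Set.Ico_subset_Icc_self hu)) s hs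
    simpa [hq0, Real.norm_eq_abs] using this
  have hMnn : 0 ≤ M := le_trans (abs_nonneg _) (by simpa using hM 0 (by norm_num))
  -- integrability of h on [0,1]
  have hmeas : Measurable h := by
    have : Measurable q := hq.continuous.measurable
    show Measurable (fun s => q s / s)
    simp only [div_eq_mul_inv]
    exact this.mul measurable_inv
  have hIntOn : MeasureTheory.IntegrableOn h (Set.Ioc (0:ℝ) 1) := by
    refine MeasureTheory.Integrable.mono' (g := fun _ : ℝ => M)
      (MeasureTheory.integrableOn_const measure_Ioc_lt_top.ne)
      hmeas.aestronglyMeasurable.restrict ?_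
    rw [MeasureTheory.ae_restrict_iff' measurableSet_Ioc]
    filter_upwards with s hs
    have h1 : |q s| ≤ M * s := hqbound s (Set.Ioc_subset_Icc_self hs)
    have h2 : |h s| = |q s| / s := by
      rw [hhdef]; rw [abs_div, abs_of_pos hs.1]
    rw [Real.norm_eq_abs, h2]
    rw [div_le_iff₀ hs.1]
    linarith [h1]
  have hInt : IntervalIntegrable h MeasureTheory.volume 0 1 :=
    (intervalIntegrable_iff_integrableOn_Ioc_of_le zero_le_one).mpr hIntOn
  have hsub1 : Set.uIcc (0:ℝ) lam ⊆ Set.uIcc (0:ℝ) 1 := by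
    rw [Set.uIcc_of_le hlam0, Set.uIcc_of_le zero_le_one]
    exact Set.Icc_subset_Icc le_rfl hlam1
  have hsub2 : Set.uIcc lam (1:ℝ) ⊆ Set.uIcc (0:ℝ) 1 := by
    rw [Set.uIcc_of_le hlam1, Set.uIcc_of_le zero_le_one]
    exact Set.Icc_subset_Icc hlam0 le_rfl
  have hIntl : IntervalIntegrable h MeasureTheory.volume 0 lam := hInt.mono_set hsub1
  have hIntr : IntervalIntegrable h MeasureTheory.volume lam 1 := hInt.mono_set hsub2
  -- g x
  have hgx : g x = f xs + ∫ t in (0:ℝ)..1, h t := by rw [hg]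
  -- g (xs + lam • Δ)
  have key : g (xs + lam • Δ) = f xs + lam * ∫ t in (0:ℝ)..lam, h t := by
    rw [hg]
    have harg : (xs + lam • Δ) - xs = lam • Δ := add_sub_cancel_left xs _
    have hint : (∫ t in (0:ℝ)..1,
          ⟪gradient f (xs + t • ((xs + lam • Δ) - xs)), (xs + lam • Δ) - xs⟫ / t)
        = ∫ t in (0:ℝ)..1, lam ^ 2 * h (lam * t) := by
      apply intervalIntegral.integral_congr
      intro t _
      rcases eq_or_ne t 0 with rfl | ht
      · show ⟪gradient f (xs + (0:ℝ) • ((xs + lam • Δ) - xs)), (xs + lam • Δ) - xs⟫ / 0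
            = lam ^ 2 * h (lam * 0)
        simp [hhdef, hqdef, hgrad0]
      · show ⟪gradient f (xs + t • ((xs + lam • Δ) - xs)), (xs + lam • Δ) - xs⟫ / t
            = lam ^ 2 * h (lam * t)
        rw [harg]
        have hss : t • lam • Δ = (lam * t) • Δ := by
          rw [smul_smul, mul_comm]
        rw [hss, real_inner_smul_right]
        rw [hhdef, hqdef]
        field_simp
    show f xs + (∫ t in (0:ℝ)..1,
        ⟪gradient f (xs + t • ((xs + lam • Δ) - xs)), (xs + lam • Δ) - xs⟫ / t)
      = f xs + lam * ∫ t in (0:ℝ)..lam, h t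
    rw [hint, intervalIntegral.integral_const_mul]
    have hsub : lam • ∫ t in (0:ℝ)..1, h (lam * t) = ∫ t in (0:ℝ)..lam, h t := by
      simpa using intervalIntegral.smul_integral_comp_mul_left (a := 0) (b := 1) h lam
    have : (∫ t in (0:ℝ)..1, h (lam * t)) = lam⁻¹ * ∫ t in (0:ℝ)..lam, h t := by
      rw [← hsub]; simp [smul_eq_mul]; field_simp; exact hsub
    rw [this]
    have hln : lam ≠ 0 := ne_of_gt hlampos
    field_simp
  -- inequality between integrals
  have hsplit : (∫ t in (0:ℝ)..lam, h t) + (∫ t in lam..1, h t) = ∫ t in (0:ℝ)..1, h t :=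
    intervalIntegral.integral_add_adjacent_intervals hIntl hIntr
  have hpos : 0 ≤ ∫ t in lam..1, h t := by
    apply intervalIntegral.integral_nonneg hlam1
    intro u hu
    exact hhnonneg u (lt_of_lt_of_le hlampos hu.1)
  have hle : (∫ t in (0:ℝ)..lam, h t) ≤ ∫ t in (0:ℝ)..1, h t := by linarith
  rw [key, hgx, hgxs]
  nlinarith [mul_le_mul_of_nonneg_left hle hlam0]
end

section
/- Let ψ : [0, ∞) → ℝ be continuously differentiable with ψ'(0) = 0 and ψ'(t)/t bounded near 0, let x* ∈ ℝ^d, and suppose f : ℝ^d → ℝ satisfies f(x) = ψ(‖x − x*‖) for all x (Euclidean norm). Then for every x ∈ ℝ^d, ∫₀¹ ⟨∇f(x* + t(x − x*)), x − x*⟩ / t dt = ‖x − x*‖ · ∫₀^{‖x − x*‖} ψ'(s)/s ds. That is, for radially symmetric losses the star-convexifying transformed loss has the closed form g(x) = f(x*) + ‖x − x*‖ ∫₀^{‖x − x*‖} ψ'(s)/s ds. -/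
open RealInnerProductSpace

/-- **Closed form of the star-convexifying transform for radially symmetric losses.**
If `ψ : [0,∞) → ℝ` is continuously differentiable with `ψ'(0) = 0` and `ψ'(t)/t`
bounded near `0`, and `f(x) = ψ(‖x − x*‖)`, then
`∫₀¹ ⟪∇f(x* + t(x − x*)), x − x*⟫ / t dt = ‖x − x*‖ ∫₀^{‖x − x*‖} ψ'(s)/s ds`. -/
theorem stmt_15 (d : ℕ) (ψ : ℝ → ℝ)
    (hψ : ContDiffOn ℝ 1 ψ (Set.Ici (0 : ℝ)))
    (hψ'0 : derivWithin ψ (Set.Ici (0 : ℝ)) 0 = 0)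
    (hbdd : ∃ C ε : ℝ, 0 < ε ∧ ∀ t ∈ Set.Ioo (0 : ℝ) ε,
      |derivWithin ψ (Set.Ici (0 : ℝ)) t / t| ≤ C)
    (xs : EuclideanSpace ℝ (Fin d)) (f : EuclideanSpace ℝ (Fin d) → ℝ)
    (hfψ : ∀ x : EuclideanSpace ℝ (Fin d), f x = ψ ‖x - xs‖) :
    ∀ x : EuclideanSpace ℝ (Fin d),
      (∫ t in (0 : ℝ)..1, ⟪gradient f (xs + t • (x - xs)), x - xs⟫ / t)
        = ‖x - xs‖ * ∫ s in (0 : ℝ)..‖x - xs‖,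
            derivWithin ψ (Set.Ici (0 : ℝ)) s / s := by
  intro x
  set v : EuclideanSpace ℝ (Fin d) := x - xs with hv
  rcases (norm_nonneg v).eq_or_lt with h0 | hrpos
  · -- degenerate case `x = xs`
    have hv0 : v = 0 := norm_eq_zero.mp h0.symm
    simp [hv0]
  · set r : ℝ := ‖v‖ with hr
    -- Pointwise identity for `t > 0`.
    have key : ∀ t : ℝ, 0 < t →
        ⟪gradient f (xs + t • v), v⟫ = r * deriv ψ (t * r) := by
      intro t ht
      have htr : 0 < t * r := mul_pos ht hrpos
      have hmem : Set.Ici (0 : ℝ) ∈ nhds (t * r) := Ici_mem_nhds htr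
      have hψd : DifferentiableAt ℝ ψ (t * r) :=
        ((hψ.differentiableOn one_ne_zero) (t * r) htr.le).differentiableAt hmem
      have hy_sub : (xs + t • v) - xs = t • v := by abel
      have hny : ‖(xs + t • v) - xs‖ = t * r := by
        rw [hy_sub, norm_smul, Real.norm_eq_abs, abs_of_pos ht]
      have hne : (xs + t • v) - xs ≠ 0 := fun h => htr.ne' (by rw [← hny, h, norm_zero])
      have hsub : DifferentiableAt ℝ (fun z : EuclideanSpace ℝ (Fin d) => z - xs)
          (xs + t • v) := differentiableAt_id.sub_const xs
      have hnormd : DifferentiableAt ℝ (fun z : EuclideanSpace ℝ (Fin d) => ‖z - xs‖)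
          (xs + t • v) := hsub.norm ℝ hne
      have hfd : DifferentiableAt ℝ f (xs + t • v) := by
        have hfe : f = fun z => ψ ‖z - xs‖ := funext hfψ
        rw [hfe]
        have hψd' : DifferentiableAt ℝ ψ ‖(xs + t • v) - xs‖ := by rw [hny]; exact hψd
        have hgn : DifferentiableAt ℝ (fun w : EuclideanSpace ℝ (Fin d) => ψ ‖w‖)
            ((xs + t • v) - xs) :=
          DifferentiableAt.comp _ hψd' (differentiableAt_id.norm ℝ hne)
        show DifferentiableAt ℝ
            ((fun w : EuclideanSpace ℝ (Fin d) => ψ ‖w‖) ∘ fun z => z - xs) (xs + t • v)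
        exact hgn.comp (xs + t • v) hsub
      have hgrad : HasGradientAt f (gradient f (xs + t • v)) (xs + t • v) :=
        hfd.hasGradientAt
      have hline : HasDerivAt (fun τ : ℝ => xs + τ • v) v t := by
        simpa using ((hasDerivAt_id t).smul_const v).const_add xs
      have h1 : HasDerivAt (fun τ : ℝ => f (xs + τ • v))
          ⟪gradient f (xs + t • v), v⟫ t := by
        have := hgrad.hasFDerivAt.comp_hasDerivAt t hline
        simpa [InnerProductSpace.toDual_apply_apply, Function.comp_def] using this
      have h2 : HasDerivAt (fun τ : ℝ => ψ (τ * r)) (deriv ψ (t * r) * r) t :=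
        hψd.hasDerivAt.comp t (hasDerivAt_mul_const r)
      have heq : (fun τ : ℝ => ψ (τ * r)) =ᶠ[nhds t] fun τ : ℝ => f (xs + τ • v) := by
        filter_upwards [Ioi_mem_nhds ht] with τ hτ
        rw [hfψ]
        have : ‖(xs + τ • v) - xs‖ = τ * r := by
          have : (xs + τ • v) - xs = τ • v := by abel
          rw [this, norm_smul, Real.norm_eq_abs, abs_of_pos hτ]
        rw [this]
      have h1' : HasDerivAt (fun τ : ℝ => ψ (τ * r))
          ⟪gradient f (xs + t • v), v⟫ t := h1.congr_of_eventuallyEq heq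
      have := h1'.unique h2
      rw [this, mul_comm]
    have hderiv_eq : ∀ s : ℝ, 0 < s →
        derivWithin ψ (Set.Ici (0 : ℝ)) s = deriv ψ s := fun s hs =>
      derivWithin_of_mem_nhds (Ici_mem_nhds hs)
    have hcongr : (∫ t in (0 : ℝ)..1, ⟪gradient f (xs + t • v), v⟫ / t)
        = ∫ t in (0 : ℝ)..1,
            r ^ 2 * (derivWithin ψ (Set.Ici (0 : ℝ)) (r * t) / (r * t)) := by
      apply intervalIntegral.integral_congr_ae
      apply Filter.Eventually.of_forall
      intro t ht
      rw [Set.uIoc_of_le (zero_le_one' ℝ)] at ht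
      have ht0 : 0 < t := ht.1
      have hrt : 0 < r * t := mul_pos hrpos ht0
      rw [key t ht0, hderiv_eq (r * t) hrt, mul_comm t r]
      field_simp
    rw [hcongr]
    rw [intervalIntegral.integral_const_mul,
      intervalIntegral.integral_comp_mul_left
        (fun s => derivWithin ψ (Set.Ici (0 : ℝ)) s / s) hrpos.ne']
    rw [mul_zero, mul_one, smul_eq_mul]
    field_simp
end

section
/- Let ψ : [0, ∞) → ℝ be twice continuously differentiable with ψ'(0) = 0, and suppose ψ''(r) + ψ'(r)/r ≥ 0 for all r ∈ (0, M], where M > 0. Fix x* ∈ ℝ^d and define L : ℝ^d → ℝ by L(x) = ψ(0) + ‖x − x*‖ ∫₀^{‖x − x*‖} ψ'(t)/t dt (Euclidean norm). Then L is convex on the closed ball {x ∈ ℝ^d : ‖x − x*‖ ≤ M}. -/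
set_option maxHeartbeats 1000000

open Set MeasureTheory intervalIntegral

lemma aux_16 (ψ : ℝ → ℝ)
    (hψ : ContDiffOn ℝ 2 ψ (Set.Ici (0 : ℝ)))
    (hψ'0 : derivWithin ψ (Set.Ici (0 : ℝ)) 0 = 0)
    (M : ℝ) (hM : 0 < M)
    (hcond : ∀ r ∈ Set.Ioc (0 : ℝ) M,
      0 ≤ derivWithin (derivWithin ψ (Set.Ici (0 : ℝ))) (Set.Ici (0 : ℝ)) r
          + derivWithin ψ (Set.Ici (0 : ℝ)) r / r) :
    ConvexOn ℝ (Set.Icc 0 M)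
        (fun r => r * ∫ t in (0 : ℝ)..r, derivWithin ψ (Set.Ici (0 : ℝ)) t / t) ∧
      MonotoneOn
        (fun r => r * ∫ t in (0 : ℝ)..r, derivWithin ψ (Set.Ici (0 : ℝ)) t / t)
        (Set.Icc 0 M) := by
  set φ : ℝ → ℝ := derivWithin ψ (Set.Ici (0 : ℝ)) with hφdef
  set φ' : ℝ → ℝ := derivWithin φ (Set.Ici (0 : ℝ)) with hφ'def
  set f : ℝ → ℝ := fun t => φ t / t with hfdef
  set g : ℝ → ℝ := fun r => ∫ t in (0 : ℝ)..r, f t with hgdef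
  set h : ℝ → ℝ := fun r => r * g r with hhdef
  set k : ℝ → ℝ := fun r => g r + φ r with hkdef
  -- basic regularity of φ
  have hφ1 : ContDiffOn ℝ 1 φ (Set.Ici (0 : ℝ)) :=
    hψ.derivWithin (uniqueDiffOn_Ici 0) (by norm_num)
  have hφc : ContinuousOn φ (Set.Ici (0 : ℝ)) := hφ1.continuousOn
  have hφdiff : DifferentiableOn ℝ φ (Set.Ici (0 : ℝ)) :=
    hφ1.differentiableOn one_ne_zero
  have hφ'c : ContinuousOn φ' (Set.Ici (0 : ℝ)) :=
    hφ1.continuousOn_derivWithin (uniqueDiffOn_Ici 0) le_rfl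
  -- f is continuous on Ioi 0
  have hfIoi : ContinuousOn f (Set.Ioi (0 : ℝ)) := by
    exact (hφc.mono Set.Ioi_subset_Ici_self).div continuousOn_id
      (fun t ht => ne_of_gt ht)
  -- bound on φ near 0 : |φ t| ≤ C * t on Icc 0 M
  obtain ⟨C, hC⟩ : ∃ C, ∀ x ∈ Set.Icc (0:ℝ) M, ‖derivWithin φ (Set.Icc 0 M) x‖ ≤ C := by
    apply (isCompact_Icc).exists_bound_of_continuousOn
    exact ((hφ1.mono (Set.Icc_subset_Ici_self)).continuousOn_derivWithin
      (uniqueDiffOn_Icc hM) le_rfl)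
  have hφbound : ∀ t ∈ Set.Icc (0:ℝ) M, |φ t| ≤ C * t := by
    intro t ht
    have := (convex_Icc (0:ℝ) M).norm_image_sub_le_of_norm_derivWithin_le
      (hφdiff.mono Set.Icc_subset_Ici_self) hC
      (Set.left_mem_Icc.2 hM.le) ht
    simpa [hψ'0, Real.norm_eq_abs, abs_of_nonneg ht.1] using this
  have hCnonneg : 0 ≤ C := le_trans (norm_nonneg _) (hC 0 (Set.left_mem_Icc.2 hM.le))
  -- f integrable on Icc 0 M
  have hfint : IntegrableOn f (Set.Icc (0:ℝ) M) := by
    constructor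
    · have h1 : AEStronglyMeasurable φ (volume.restrict (Set.Icc 0 M)) :=
        (hφc.mono Set.Icc_subset_Ici_self).aestronglyMeasurable measurableSet_Icc
      exact (h1.aemeasurable.div aemeasurable_id).aestronglyMeasurable
    · apply HasFiniteIntegral.restrict_of_bounded (C := C) measure_Icc_lt_top
      refine (ae_restrict_iff' measurableSet_Icc).2 (ae_of_all _ fun t ht => ?_)
      rcases eq_or_lt_of_le ht.1 with h0 | h0
      · simp [hfdef, ← h0, hCnonneg]
      · have : |φ t| ≤ C * t := hφbound t ht
        rw [hfdef, Real.norm_eq_abs, abs_div, abs_of_pos h0]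
        rw [div_le_iff₀ h0]
        linarith
  have hii : ∀ r ∈ Set.Icc (0:ℝ) M, IntervalIntegrable f volume 0 r := by
    intro r hr
    rw [intervalIntegrable_iff_integrableOn_Ioc_of_le hr.1]
    exact hfint.mono_set (Set.Ioc_subset_Icc_self.trans (Set.Icc_subset_Icc le_rfl hr.2))
  -- g continuous on Icc 0 M
  have hgc : ContinuousOn g (Set.Icc (0:ℝ) M) := by
    have := continuousOn_primitive (f := f) (μ := volume) (a := 0) (b := M) hfint
    apply this.congr
    intro x hx
    rw [hgdef]
    simp only
    rw [intervalIntegral.integral_of_le hx.1]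
  -- derivatives
  have hg' : ∀ r ∈ Set.Ioc (0:ℝ) M, HasDerivAt g (f r) r := by
    intro r hr
    apply intervalIntegral.integral_hasDerivAt_right (hii r ⟨hr.1.le, hr.2⟩)
    · exact ContinuousOn.stronglyMeasurableAtFilter isOpen_Ioi hfIoi r hr.1
    · exact hfIoi.continuousAt (Ioi_mem_nhds hr.1)
  have hφ' : ∀ r ∈ Set.Ioc (0:ℝ) M, HasDerivAt φ (φ' r) r := by
    intro r hr
    exact ((hφdiff r (le_of_lt hr.1)).hasDerivWithinAt).hasDerivAt (Ici_mem_nhds hr.1)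
  have hh' : ∀ r ∈ Set.Ioc (0:ℝ) M, HasDerivAt h (k r) r := by
    intro r hr
    have := (hasDerivAt_id r).mul (hg' r hr)
    have e : 1 * g r + r * f r = k r := by
      rw [hkdef, hfdef]
      simp only
      rw [mul_div_cancel₀ _ (ne_of_gt hr.1)]
      ring
    rw [← e]
    exact this
  have hk' : ∀ r ∈ Set.Ioc (0:ℝ) M, HasDerivAt k (f r + φ' r) r := by
    intro r hr
    exact (hg' r hr).add (hφ' r hr)
  have hknn : ∀ r ∈ Set.Ioc (0:ℝ) M, 0 ≤ f r + φ' r := by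
    intro r hr
    have := hcond r hr
    rw [hfdef]
    simp only
    linarith
  -- k is nonnegative on Icc 0 M
  have hkc : ContinuousOn k (Set.Icc (0:ℝ) M) :=
    hgc.add (hφc.mono Set.Icc_subset_Ici_self)
  have hioo : ∀ r ∈ interior (Set.Icc (0:ℝ) M), r ∈ Set.Ioc (0:ℝ) M := by
    intro r hr
    rw [interior_Icc] at hr
    exact ⟨hr.1, hr.2.le⟩
  have hkmono : MonotoneOn k (Set.Icc (0:ℝ) M) := by
    apply monotoneOn_of_deriv_nonneg (convex_Icc 0 M) hkc
    · intro r hr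
      exact ((hk' r (hioo r hr)).differentiableAt).differentiableWithinAt
    · intro r hr
      rw [(hk' r (hioo r hr)).deriv]
      exact hknn r (hioo r hr)
  have hk0 : k 0 = 0 := by
    rw [hkdef]
    simp only
    rw [hgdef]
    simp [hψ'0]
  have hknonneg : ∀ r ∈ Set.Icc (0:ℝ) M, 0 ≤ k r := by
    intro r hr
    rw [← hk0]
    exact hkmono (Set.left_mem_Icc.2 hM.le) hr hr.1
  -- h continuity
  have hhc : ContinuousOn h (Set.Icc (0:ℝ) M) := continuousOn_id.mul hgc
  -- convexity of h
  constructor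
  · apply convexOn_of_deriv2_nonneg (convex_Icc 0 M) hhc
    · intro r hr
      exact ((hh' r (hioo r hr)).differentiableAt).differentiableWithinAt
    · intro r hr
      have heq : deriv h =ᶠ[nhds r] k := by
        rw [interior_Icc] at hr
        filter_upwards [Ioo_mem_nhds hr.1 hr.2] with x hx
        exact (hh' x ⟨hx.1, hx.2.le⟩).deriv
      exact (heq.differentiableAt_iff.2
        (hk' r (hioo r hr)).differentiableAt).differentiableWithinAt
    · intro r hr
      have heq : deriv h =ᶠ[nhds r] k := by
        rw [interior_Icc] at hr
        filter_upwards [Ioo_mem_nhds hr.1 hr.2] with x hx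
        exact (hh' x ⟨hx.1, hx.2.le⟩).deriv
      show 0 ≤ deriv (deriv h) r
      rw [heq.deriv_eq, (hk' r (hioo r hr)).deriv]
      exact hknn r (hioo r hr)
  · apply monotoneOn_of_deriv_nonneg (convex_Icc 0 M) hhc
    · intro r hr
      exact ((hh' r (hioo r hr)).differentiableAt).differentiableWithinAt
    · intro r hr
      rw [(hh' r (hioo r hr)).deriv]
      exact hknonneg r ⟨(hioo r hr).1.le, (hioo r hr).2⟩

/-- **Convexity of the star-convexified radial loss on a ball.**
If `ψ : [0,∞) → ℝ` is `C²` with `ψ'(0) = 0` and `ψ''(r) + ψ'(r)/r ≥ 0` on `(0, M]`,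
then `L(x) = ψ(0) + ‖x − x*‖ ∫₀^{‖x − x*‖} ψ'(t)/t dt` is convex on the closed ball
of radius `M` around `x*`. -/
theorem stmt_16 (d : ℕ) (ψ : ℝ → ℝ)
    (hψ : ContDiffOn ℝ 2 ψ (Set.Ici (0 : ℝ)))
    (hψ'0 : derivWithin ψ (Set.Ici (0 : ℝ)) 0 = 0)
    (M : ℝ) (hM : 0 < M)
    (hcond : ∀ r ∈ Set.Ioc (0 : ℝ) M,
      0 ≤ derivWithin (derivWithin ψ (Set.Ici (0 : ℝ))) (Set.Ici (0 : ℝ)) r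
          + derivWithin ψ (Set.Ici (0 : ℝ)) r / r)
    (xs : EuclideanSpace ℝ (Fin d)) (L : EuclideanSpace ℝ (Fin d) → ℝ)
    (hL : L = fun x => ψ 0 + ‖x - xs‖ *
      ∫ t in (0 : ℝ)..‖x - xs‖, derivWithin ψ (Set.Ici (0 : ℝ)) t / t) :
    ConvexOn ℝ (Metric.closedBall xs M) L := by
  obtain ⟨hconv, hmono⟩ := aux_16 ψ hψ hψ'0 M hM hcond
  set h : ℝ → ℝ :=
    fun r => r * ∫ t in (0 : ℝ)..r, derivWithin ψ (Set.Ici (0 : ℝ)) t / t with hhdef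
  have hmem : ∀ x ∈ Metric.closedBall xs M, ‖x - xs‖ ∈ Set.Icc (0:ℝ) M := by
    intro x hx
    exact ⟨norm_nonneg _, by rwa [Metric.mem_closedBall, dist_eq_norm] at hx⟩
  subst hL
  refine ⟨convex_closedBall xs M, ?_⟩
  intro x hx y hy a b ha hb hab
  have hx' := hmem x hx
  have hy' := hmem y hy
  have hcombo : a • x + b • y - xs = a • (x - xs) + b • (y - xs) := by
    have e : a • (x - xs) + b • (y - xs) = a • x + b • y - (a + b) • xs := by module
    rw [e, hab, one_smul]
  have hnle : ‖a • x + b • y - xs‖ ≤ a * ‖x - xs‖ + b * ‖y - xs‖ := by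
    rw [hcombo]
    calc ‖a • (x - xs) + b • (y - xs)‖ ≤ ‖a • (x - xs)‖ + ‖b • (y - xs)‖ := norm_add_le _ _
    _ = a * ‖x - xs‖ + b * ‖y - xs‖ := by
        rw [norm_smul, norm_smul, Real.norm_of_nonneg ha, Real.norm_of_nonneg hb]
  have hvmem : a * ‖x - xs‖ + b * ‖y - xs‖ ∈ Set.Icc (0:ℝ) M := by
    constructor
    · positivity
    · calc a * ‖x - xs‖ + b * ‖y - xs‖ ≤ a * M + b * M := by
            apply add_le_add (mul_le_mul_of_nonneg_left hx'.2 ha)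
              (mul_le_mul_of_nonneg_left hy'.2 hb)
      _ = M := by rw [← add_mul, hab, one_mul]
  have humem : ‖a • x + b • y - xs‖ ∈ Set.Icc (0:ℝ) M :=
    ⟨norm_nonneg _, hnle.trans hvmem.2⟩
  have step1 : h ‖a • x + b • y - xs‖ ≤ h (a * ‖x - xs‖ + b * ‖y - xs‖) :=
    hmono humem hvmem hnle
  have step2 : h (a * ‖x - xs‖ + b * ‖y - xs‖) ≤ a * h ‖x - xs‖ + b * h ‖y - xs‖ := by
    have := hconv.2 hx' hy' ha hb hab
    simpa [smul_eq_mul] using this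
  simp only [smul_eq_mul]
  show ψ 0 + h ‖a • x + b • y - xs‖ ≤
    a * (ψ 0 + h ‖x - xs‖) + b * (ψ 0 + h ‖y - xs‖)
  have : a * ψ 0 + b * ψ 0 = ψ 0 := by rw [← add_mul, hab, one_mul]
  nlinarith [step1.trans step2]
end

section
/- Define L : ℝ → ℝ by L(x) = x²/(1 + x²) + x·arctan(x). Then L is twice continuously differentiable with L''(x) = 4(1 − x²)/(1 + x²)³; hence L''(x) ≥ 0 exactly when |x| ≤ 1, and therefore L is convex on the interval [−1, 1] but not convex on any open interval containing a point with |x| > 1. (L is the star-convexifying transformation of the nonconvex Geman–McClure loss f(x) = x²/(1 + x²), and its convexity radius 1 strictly exceeds the original Newton convergence radius 1/√3.) -/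
noncomputable def Lfun : ℝ → ℝ := fun x => x ^ 2 / (1 + x ^ 2) + x * Real.arctan x

lemma denom_pos (x : ℝ) : (0:ℝ) < 1 + x ^ 2 := by positivity

lemma hasDerivAt_Lfun (x : ℝ) :
    HasDerivAt Lfun (2 * x / (1 + x ^ 2) ^ 2 + Real.arctan x + x / (1 + x ^ 2)) x := by
  have hd : (1 + x ^ 2) ≠ 0 := (denom_pos x).ne'
  have h1 : HasDerivAt (fun y : ℝ => y ^ 2 / (1 + y ^ 2))
      ((2 * x ^ 1 * (1 + x ^ 2) - x ^ 2 * (0 + 2 * x ^ 1)) / (1 + x ^ 2) ^ 2) x :=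
    (hasDerivAt_pow 2 x).div ((hasDerivAt_const x 1).add (hasDerivAt_pow 2 x)) hd
  have h2 : HasDerivAt (fun y : ℝ => y * Real.arctan y)
      (1 * Real.arctan x + x * (1 / (1 + x ^ 2))) x :=
    (hasDerivAt_id x).mul (Real.hasDerivAt_arctan x)
  have := h1.add h2
  convert this using 1
  case e'_9 => field_simp; ring
  all_goals rfl

lemma deriv_Lfun : deriv Lfun = fun x => 2 * x / (1 + x ^ 2) ^ 2 + Real.arctan x + x / (1 + x ^ 2) := by
  funext x; exact (hasDerivAt_Lfun x).deriv

lemma hasDerivAt_deriv_Lfun (x : ℝ) :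
    HasDerivAt (deriv Lfun) (4 * (1 - x ^ 2) / (1 + x ^ 2) ^ 3) x := by
  rw [deriv_Lfun]
  have hd : (1 + x ^ 2) ≠ 0 := (denom_pos x).ne'
  have hd2 : ((1 + x ^ 2) ^ 2 : ℝ) ≠ 0 := pow_ne_zero 2 hd
  have hden : HasDerivAt (fun y : ℝ => 1 + y ^ 2) (0 + 2 * x ^ 1) x :=
    (hasDerivAt_const x 1).add (hasDerivAt_pow 2 x)
  have h1 : HasDerivAt (fun y : ℝ => 2 * y / (1 + y ^ 2) ^ 2)
      ((2 * 1 * (1 + x ^ 2) ^ 2 - 2 * x * (2 * (1 + x ^ 2) ^ (2 - 1) * (0 + 2 * x ^ 1))) / ((1 + x ^ 2) ^ 2) ^ 2) x := by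
    have := (hasDerivAt_id' (𝕜 := ℝ) x).const_mul 2 |>.div (hden.pow 2) hd2
    convert this using 2
    case e'_9.e'_5 => norm_num
    case e'_9.e'_6 => rfl
    all_goals rfl
  have h2 := Real.hasDerivAt_arctan x
  have h3 : HasDerivAt (fun y : ℝ => y / (1 + y ^ 2))
      ((1 * (1 + x ^ 2) - x * (0 + 2 * x ^ 1)) / (1 + x ^ 2) ^ 2) x :=
    (hasDerivAt_id x).div hden hd
  have := (h1.add h2).add h3
  convert this using 1
  case e'_9 => field_simp; ring
  all_goals rfl

lemma deriv2_Lfun : deriv (deriv Lfun) = fun x => 4 * (1 - x ^ 2) / (1 + x ^ 2) ^ 3 := by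
  funext x; exact (hasDerivAt_deriv_Lfun x).deriv

lemma contDiff_Lfun : ContDiff ℝ 2 Lfun := by
  apply ContDiff.add
  · exact (contDiff_id.pow 2).div (contDiff_const.add (contDiff_id.pow 2))
      (fun x => (denom_pos x).ne')
  · exact contDiff_id.mul (Real.contDiff_arctan.of_le le_top)

/-- **Convexity region of the star-convexified Geman–McClure loss
`L(x) = x²/(1 + x²) + x·arctan(x)`.**
`L` is `C²` with `L''(x) = 4(1 − x²)/(1 + x²)³`; hence `L'' x ≥ 0` iff `|x| ≤ 1`,
`L` is convex on `[−1, 1]`, and not convex on any open interval containing a point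
with `|x| > 1`. -/
theorem stmt_19 (L : ℝ → ℝ)
    (hL : L = fun x => x ^ 2 / (1 + x ^ 2) + x * Real.arctan x) :
    ContDiff ℝ 2 L ∧
    (∀ x : ℝ, deriv (deriv L) x = 4 * (1 - x ^ 2) / (1 + x ^ 2) ^ 3) ∧
    (∀ x : ℝ, 0 ≤ deriv (deriv L) x ↔ |x| ≤ 1) ∧
    ConvexOn ℝ (Set.Icc (-1 : ℝ) 1) L ∧
    (∀ a b : ℝ, a < b → (∃ x ∈ Set.Ioo a b, 1 < |x|) →
      ¬ ConvexOn ℝ (Set.Ioo a b) L) := by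
  have hLL : L = Lfun := hL
  subst hLL
  have h2 := deriv2_Lfun
  refine ⟨contDiff_Lfun, fun x => by rw [h2], ?_, ?_, ?_⟩
  · intro x
    rw [h2]
    simp only
    constructor
    · intro h
      rw [abs_le]
      have hp : (0:ℝ) < (1 + x ^ 2) ^ 3 := by positivity
      have : 0 ≤ 4 * (1 - x ^ 2) := by
        by_contra hc
        push_neg at hc
        have := div_neg_of_neg_of_pos hc hp
        linarith
      constructor <;> nlinarith
    · intro h
      rw [abs_le] at h
      apply div_nonneg _ (by positivity)
      nlinarith [h.1, h.2]
  · apply convexOn_of_deriv2_nonneg (convex_Icc _ _)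
    · exact contDiff_Lfun.continuous.continuousOn
    · exact fun x _ => ((hasDerivAt_Lfun x).differentiableAt).differentiableWithinAt
    · exact fun x _ => ((hasDerivAt_deriv_Lfun x).differentiableAt).differentiableWithinAt
    · intro x hx
      rw [interior_Icc] at hx
      show 0 ≤ deriv (deriv Lfun) x
      rw [h2]
      apply div_nonneg _ (by positivity)
      nlinarith [hx.1, hx.2]
  · rintro a b hab ⟨x0, hx0, hx0abs⟩ hconv
    -- build subinterval (l, r) ⊆ Ioo a b with |t| > 1 on it
    obtain ⟨l, r, hlr, hsub, habs⟩ :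
        ∃ l r : ℝ, l < r ∧ Set.Ioo l r ⊆ Set.Ioo a b ∧ ∀ t ∈ Set.Ioo l r, 1 < |t| := by
      rcases lt_abs.mp hx0abs with h | h
      · refine ⟨max a ((1 + x0) / 2), min b (x0 + 1), ?_, ?_, ?_⟩
        · exact (max_lt hx0.1 (by linarith)).trans (lt_min hx0.2 (by linarith))
        · intro t ht
          exact ⟨(le_max_left _ _).trans_lt ht.1, ht.2.trans_le (min_le_left _ _)⟩
        · intro t ht
          have : (1 + x0) / 2 < t := (le_max_right _ _).trans_lt ht.1
          calc (1:ℝ) < t := by linarith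
            _ ≤ |t| := le_abs_self t
      · refine ⟨max a (x0 - 1), min b ((x0 - 1) / 2), ?_, ?_, ?_⟩
        · exact (max_lt hx0.1 (by linarith)).trans (lt_min hx0.2 (by linarith))
        · intro t ht
          exact ⟨(le_max_left _ _).trans_lt ht.1, ht.2.trans_le (min_le_left _ _)⟩
        · intro t ht
          have : t < (x0 - 1) / 2 := ht.2.trans_le (min_le_right _ _)
          calc (1:ℝ) < -t := by linarith
            _ ≤ |t| := neg_le_abs t
    have hconc : StrictConcaveOn ℝ (Set.Ioo l r) Lfun := by
      apply strictConcaveOn_of_deriv2_neg (convex_Ioo _ _)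
        contDiff_Lfun.continuous.continuousOn
      intro x hx
      rw [interior_Ioo] at hx
      show deriv (deriv Lfun) x < 0
      rw [h2]
      apply div_neg_of_neg_of_pos _ (by positivity)
      have := habs x hx
      rw [lt_abs] at this
      rcases this with h | h <;> nlinarith
    set p := l + (r - l) / 4 with hp
    set q := r - (r - l) / 4 with hq
    have hpq : p < q := by simp only [hp, hq]; linarith
    have hpmem : p ∈ Set.Ioo l r := by constructor <;> simp only [hp] <;> linarith
    have hqmem : q ∈ Set.Ioo l r := by constructor <;> simp only [hq] <;> linarith
    have h1 := hconc.2 hpmem hqmem hpq.ne (by norm_num : (0:ℝ) < 1/2)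
      (by norm_num : (0:ℝ) < 1/2) (by norm_num)
    have h2' := hconv.2 (hsub hpmem) (hsub hqmem) (by norm_num : (0:ℝ) ≤ 1/2)
      (by norm_num : (0:ℝ) ≤ 1/2) (by norm_num)
    simp only [smul_eq_mul] at h1 h2'
    linarith
end
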